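/- For real numbers s, t with s,t ≥ 1, the 2×2 symmetric matrix with diagonal entries σ(s,t) = (s+1)(t²(st+2s−1)+s(st−2t−1)) and σ(t,s), and off-diagonal entries τ(s,t) = (s+t)^{3/2}(st−1)√((s+1)(t+1)), is positive semidefinite; i.e., σ(s,t) ≥ 0, σ(t,s) ≥ 0 and σ(s,t)σ(t,s) ≥ τ(s,t)². -/

import Mathlib

open Matrix

noncomputable def sigmaGQ (s t : ℝ) : ℝ :=
  (s + 1) * (t ^ 2 * (s * t + 2 * s - 1) + s * (s * t - 2 * t - 1))

noncomputable def tauGQ (s t : ℝ) : ℝ :=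
  Real.sqrt ((s + t) ^ 3) * (s * t - 1) * Real.sqrt ((s + 1) * (t + 1))

/-!
Substituting `s = 1 + a`, `t = 1 + b` with `a, b ≥ 0`, both `σ(s,t)` and the determinant
`σ(s,t) σ(t,s) - τ(s,t)²` become polynomials in `a, b` with nonnegative coefficients, so the
diagonal entries and the determinant of the symmetric `2 × 2` matrix are nonnegative, which makes
it positive semidefinite.
-/

theorem posSemidef_fin_two_of_sq_le {a b d : ℝ} (ha : 0 ≤ a) (hd : 0 ≤ d) (hb : b ^ 2 ≤ a * d) :
    (!![a, b; b, d] : Matrix (Fin 2) (Fin 2) ℝ).PosSemidef := by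
  rw [posSemidef_iff_dotProduct_mulVec]
  refine ⟨by ext i j; fin_cases i <;> fin_cases j <;> rfl, fun x => ?_⟩
  have hform : star x ⬝ᵥ (!![a, b; b, d] *ᵥ x) = a * x 0 ^ 2 + 2 * b * x 0 * x 1 + d * x 1 ^ 2 := by
    simp [mulVec, dotProduct, Fin.sum_univ_two]
    ring
  rw [hform]
  rcases ha.eq_or_lt with rfl | ha
  · obtain rfl : b = 0 := by nlinarith
    nlinarith [sq_nonneg (x 1)]
  · -- completing the square: `a q(x) = (a x₀ + b x₁)² + (a d - b²) x₁²`
    refine nonneg_of_mul_nonneg_right ?_ ha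
    nlinarith [sq_nonneg (a * x 0 + b * x 1), mul_nonneg (sub_nonneg.2 hb) (sq_nonneg (x 1))]

theorem sigmaGQ_nonneg {s t : ℝ} (hs : 1 ≤ s) (ht : 1 ≤ t) : 0 ≤ sigmaGQ s t := by
  obtain ⟨a, ha, rfl⟩ : ∃ a, 0 ≤ a ∧ s = 1 + a := ⟨s - 1, by linarith, by ring⟩
  obtain ⟨b, hb, rfl⟩ : ∃ b, 0 ≤ b ∧ t = 1 + b := ⟨t - 1, by linarith, by ring⟩
  unfold sigmaGQ
  ring_nf
  positivity

theorem tauGQ_sq {s t : ℝ} (hs : 0 ≤ s) (ht : 0 ≤ t) :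
    tauGQ s t ^ 2 = (s + t) ^ 3 * (s * t - 1) ^ 2 * ((s + 1) * (t + 1)) := by
  rw [tauGQ, mul_pow, mul_pow, Real.sq_sqrt (by positivity), Real.sq_sqrt (by positivity)]

theorem tauGQ_sq_le {s t : ℝ} (hs : 1 ≤ s) (ht : 1 ≤ t) :
    tauGQ s t ^ 2 ≤ sigmaGQ s t * sigmaGQ t s := by
  rw [tauGQ_sq (by linarith) (by linarith), ← sub_nonneg]
  obtain ⟨a, ha, rfl⟩ : ∃ a, 0 ≤ a ∧ s = 1 + a := ⟨s - 1, by linarith, by ring⟩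
  obtain ⟨b, hb, rfl⟩ : ∃ b, 0 ≤ b ∧ t = 1 + b := ⟨t - 1, by linarith, by ring⟩
  unfold sigmaGQ
  ring_nf
  positivity

theorem stmt_15 (s t : ℝ) (hs : 1 ≤ s) (ht : 1 ≤ t) :
    (!![sigmaGQ s t, tauGQ s t; tauGQ s t, sigmaGQ t s]).PosSemidef ∧
    0 ≤ sigmaGQ s t ∧ 0 ≤ sigmaGQ t s ∧ tauGQ s t ^ 2 ≤ sigmaGQ s t * sigmaGQ t s := by
  have hst := sigmaGQ_nonneg hs ht
  have hts := sigmaGQ_nonneg ht hs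
  have hdet := tauGQ_sq_le hs ht
  exact ⟨posSemidef_fin_two_of_sq_le hst hts hdet, hst, hts, hdet⟩
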